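/- Under the hypotheses of Theorem 1 (A strictly upper triangular integer matrix with B = (I-A)^{-1} nonnegative), for each n the number of λ ∈ P_A of weight n satisfying additionally λ_1 = Σ_{j≥2} A[1,j]·λ_j (equality in the first constraint) equals the number of (s_2,...,s_k) ∈ ℕ^{k-1} with b_2·s_2 + ... + b_k·s_k = n, where b_i is the i-th column sum of B. -/

import Mathlib

/-!
The slack vector `s = (1 - A) λ` of `λ` is a change of variables on `ℤ^k`: `A` is nilpotent, so
`B = ∑_{m<k} A^m` inverts `1 - A` and `λ = B s`. Under it `P_A` corresponds to `ℕ^k`, equality in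
the first constraint to `s₁ = 0`, and the weight `∑ λᵢ = ∑ bᵢ sᵢ`.
-/

open Matrix Finset

namespace Matrix

theorem pow_apply_eq_zero_of_lt_add {R : Type*} [Semiring R] {k : ℕ}
    {A : Matrix (Fin k) (Fin k) R} (hA : ∀ i j : Fin k, j ≤ i → A i j = 0) (m : ℕ)
    {i j : Fin k} (hij : (j : ℕ) < i + m) : (A ^ m) i j = 0 := by
  induction m generalizing j with
  | zero => exact (pow_zero A).symm ▸ one_apply_ne (by rintro rfl; omega)
  | succ m ih =>
    rw [pow_succ, mul_apply]
    refine sum_eq_zero fun l _ => ?_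
    rcases lt_or_ge (l : ℕ) (i + m) with hl | hl
    · rw [ih hl, zero_mul]
    · rw [hA l j (Fin.le_iff_val_le_val.mpr (by omega)), mul_zero]

theorem pow_eq_zero_of_strictUpper {R : Type*} [Semiring R] {k : ℕ}
    {A : Matrix (Fin k) (Fin k) R} (hA : ∀ i j : Fin k, j ≤ i → A i j = 0) : A ^ k = 0 := by
  ext i j
  exact pow_apply_eq_zero_of_lt_add hA k (by omega)

theorem one_sub_mulVec_apply {ι R : Type*} [Fintype ι] [DecidableEq ι] [Ring R]
    (A : Matrix ι ι R) (v : ι → R) (i : ι) :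
    ((1 - A) *ᵥ v) i = v i - ∑ j, A i j * v j := by
  rw [sub_mulVec, one_mulVec]
  rfl

theorem sum_mulVec_eq_sum_colSum_mul {m n R : Type*} [Fintype m] [Fintype n]
    [NonUnitalNonAssocSemiring R] (B : Matrix m n R) (v : n → R) :
    ∑ i, (B *ᵥ v) i = ∑ j, (∑ i, B i j) * v j := by
  simp only [mulVec, dotProduct, sum_mul]
  exact sum_comm

end Matrix

section Slack

variable {ι : Type*} [Fintype ι] [DecidableEq ι] {A B : Matrix ι ι ℤ}

theorem setOf_le_mulVec_eq_image_natCast (hBA : B * (1 - A) = 1) (hAB : (1 - A) * B = 1)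
    (i₀ : ι) (n : ℤ) :
    {lam : ι → ℤ | (∀ i, ∑ j, A i j * lam j ≤ lam i) ∧
      lam i₀ = ∑ j, A i₀ j * lam j ∧ ∑ i, lam i = n} =
    (fun s : ι → ℕ => B *ᵥ ((↑) ∘ s)) ''
      {s | s i₀ = 0 ∧ ∑ i, (∑ j, B j i) * (s i : ℤ) = n} := by
  ext lam
  constructor
  · rintro ⟨hle, heq, hn⟩
    set t := (1 - A) *ᵥ lam with ht_def
    have ht : ∀ i, t i = lam i - ∑ j, A i j * lam j := one_sub_mulVec_apply A lam
    have hlam : B *ᵥ t = lam := by rw [ht_def, mulVec_mulVec, hBA, one_mulVec]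
    have hcast : (↑) ∘ (fun i => (t i).toNat) = t :=
      funext fun i => Int.toNat_of_nonneg (by rw [ht]; linarith [hle i])
    refine ⟨fun i => (t i).toNat, ⟨?_, ?_⟩, by simp only [hcast, hlam]⟩
    · simp [ht, ← heq]
    · rw [← hn, ← hlam, sum_mulVec_eq_sum_colSum_mul, ← hcast]
      rfl
  · rintro ⟨s, ⟨hs₀, hn⟩, rfl⟩
    have hs : ∀ i, (s i : ℤ) = (B *ᵥ ((↑) ∘ s)) i - ∑ j, A i j * (B *ᵥ ((↑) ∘ s)) j :=
      fun i => by rw [← one_sub_mulVec_apply, mulVec_mulVec, hAB, one_mulVec]; rfl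
    refine ⟨fun i => ?_, ?_, (sum_mulVec_eq_sum_colSum_mul B _).trans hn⟩
    · linarith [hs i, (s i).cast_nonneg (α := ℤ)]
    · linarith [hs i₀, hs₀]

theorem ncard_setOf_le_mulVec (hBA : B * (1 - A) = 1) (hAB : (1 - A) * B = 1)
    (i₀ : ι) (n : ℤ) :
    {lam : ι → ℤ | (∀ i, ∑ j, A i j * lam j ≤ lam i) ∧
      lam i₀ = ∑ j, A i₀ j * lam j ∧ ∑ i, lam i = n}.ncard =
    {s : ι → ℕ | s i₀ = 0 ∧ ∑ i, (∑ j, B j i) * (s i : ℤ) = n}.ncard := by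
  have hB : Function.Injective (B *ᵥ ·) :=
    Function.LeftInverse.injective (g := ((1 - A) *ᵥ ·)) fun v => by
      simp only [mulVec_mulVec, hAB, one_mulVec]
  rw [setOf_le_mulVec_eq_image_natCast hBA hAB]
  exact Set.ncard_image_of_injective _ (hB.comp Nat.cast_injective.comp_left)

end Slack

theorem stmt_4_general (k n : ℕ) (hk : 0 < k) (A : Matrix (Fin k) (Fin k) ℤ)
    (hA : ∀ i j : Fin k, j ≤ i → A i j = 0) :
    {lam : Fin k → ℤ | (∀ i, ∑ j, A i j * lam j ≤ lam i) ∧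
      lam ⟨0, hk⟩ = ∑ j, A ⟨0, hk⟩ j * lam j ∧ ∑ i, lam i = (n : ℤ)}.ncard =
    {s : Fin k → ℕ | s ⟨0, hk⟩ = 0 ∧
      ∑ i, (∑ j, (∑ m ∈ Finset.range k, A ^ m) j i) * (s i : ℤ) = (n : ℤ)}.ncard := by
  have hnil : A ^ k = 0 := pow_eq_zero_of_strictUpper hA
  exact ncard_setOf_le_mulVec (A := A) (B := ∑ m ∈ range k, A ^ m)
    (by rw [geom_sum_mul_neg, hnil, sub_zero]) (by rw [mul_neg_geom_sum, hnil, sub_zero]) ⟨0, hk⟩ n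

/-- under the hypotheses of Theorem 1, the number of `λ ∈ P_A` of weight `n`
with equality in the first constraint equals the number of `(s₂,…,s_k) ∈ ℕ^{k-1}` with
`b₂s₂ + ⋯ + b_k s_k = n` (modelled as `s : ℕ^k` with `s₁ = 0`). -/
theorem stmt_4 (k n : ℕ) (hk : 0 < k) (A : Matrix (Fin k) (Fin k) ℤ)
    (hA : ∀ i j : Fin k, j ≤ i → A i j = 0)
    (hB : ∀ i j : Fin k, 0 ≤ (∑ m ∈ Finset.range k, A ^ m) i j) :
    {lam : Fin k → ℤ | (∀ i, ∑ j, A i j * lam j ≤ lam i) ∧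
      lam ⟨0, hk⟩ = ∑ j, A ⟨0, hk⟩ j * lam j ∧ ∑ i, lam i = (n : ℤ)}.ncard =
    {s : Fin k → ℕ | s ⟨0, hk⟩ = 0 ∧
      ∑ i, (∑ j, (∑ m ∈ Finset.range k, A ^ m) j i) * (s i : ℤ) = (n : ℤ)}.ncard :=
  stmt_4_general k n hk A hA
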